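/- The absolute linear Harbourne constant for 6 lines equals −12/7: for every field K and every configuration 𝓛 of 6 mutually distinct lines in the projective plane over K, H_L(K,𝓛) ≥ −12/7, and there exists a configuration 𝓛 of 6 mutually distinct lines in the projective plane over ℂ with H_L(ℂ,𝓛) = −12/7 (namely one with t_2 = 3, t_3 = 4). -/

import Mathlib

/-- Points of the projective plane over `K`. -/
abbrev PPoint (K : Type*) [Field K] := Projectivization K (Fin 3 → K)

/-- Lines of the projective plane over `K`: points of the projectivization of the dual space. -/
abbrev PLine (K : Type*) [Field K] := Projectivization K (Module.Dual K (Fin 3 → K))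

/-- A point lies on a line iff a representative functional of the line vanishes on a
representative vector of the point. -/
def OnLine {K : Type*} [Field K] (P : PPoint K) (L : PLine K) : Prop :=
  L.rep P.rep = 0

/-- The multiplicity of a point `P` with respect to a configuration `𝓛`:
the number of lines of `𝓛` passing through `P`. -/
noncomputable def mult {K : Type*} [Field K] (𝓛 : Finset (PLine K)) (P : PPoint K) : ℕ :=
  {L : PLine K | L ∈ 𝓛 ∧ OnLine P L}.ncard

/-- The singular points of a configuration: points lying on at least two of its lines. -/
def SingPts {K : Type*} [Field K] (𝓛 : Finset (PLine K)) : Set (PPoint K) :=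
  {P | 2 ≤ mult 𝓛 P}

/-- `tk 𝓛 k` is the number of points of multiplicity exactly `k` (used for `k ≥ 2`). -/
noncomputable def tk {K : Type*} [Field K] (𝓛 : Finset (PLine K)) (k : ℕ) : ℕ :=
  {P : PPoint K | mult 𝓛 P = k}.ncard

/-- The linear Harbourne constant of a configuration `𝓛` of lines:
`(d² − Σ_P m_𝓛(P)²)/s` where the sum runs over the `s` singular points of `𝓛`. -/
noncomputable def HL {K : Type*} [Field K] (𝓛 : Finset (PLine K)) : ℚ :=
  ((𝓛.card : ℚ) ^ 2 - ∑ᶠ P ∈ SingPts 𝓛, (mult 𝓛 P : ℚ) ^ 2) / ((SingPts 𝓛).ncard : ℚ)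

/-!
Two distinct lines meet in exactly one point, so counting ordered pairs of lines gives
`∑ m_P (m_P - 1) = d (d - 1)` over the singular points, hence `H_L = (d - ∑ m_P) / s`.
For `d = 6` the bound `H_L ≥ -12/7` reads `∑ (7 m_P - 12) ≤ 42`. On each line the numbers
`m_P - 1` add up to `d - 1 = 5`, which is odd, so every line passes through a singular point of
even multiplicity, and therefore `∑_{m_P even} m_P ≥ 6`. The pointwise inequality
`2 (7m - 12) + [m even] m ≤ 3 m (m - 1)` for `m ≥ 2` combines the two counts into the bound.
Equality holds for the six sides of a complete quadrangle: its four vertices are triple points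
and its three diagonal points are double points.
-/

open Module Submodule Projectivization Finset

section Incidence

variable {K : Type*} [Field K]

lemma onLine_mk_iff {v : Fin 3 → K} {f : Dual K (Fin 3 → K)} (hv : v ≠ 0) (hf : f ≠ 0) :
    OnLine (mk K v hv) (mk K f hf) ↔ f v = 0 := by
  obtain ⟨a, ha⟩ := exists_smul_eq_mk_rep K v hv
  obtain ⟨b, hb⟩ := exists_smul_eq_mk_rep K f hf
  simp [OnLine, ← ha, ← hb, Units.smul_def]

lemma exists_onLine_onLine (L₁ L₂ : PLine K) : ∃ P : PPoint K, OnLine P L₁ ∧ OnLine P L₂ := by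
  have hker : LinearMap.ker (L₁.rep.prod L₂.rep) ≠ ⊥ :=
    LinearMap.ker_ne_bot_of_finrank_lt (by simp)
  obtain ⟨v, hv, hv0⟩ := (Submodule.ne_bot_iff _).1 hker
  refine ⟨mk K v hv0, ?_, ?_⟩
  · rw [← mk_rep L₁, onLine_mk_iff]; simpa using congrArg Prod.fst hv
  · rw [← mk_rep L₂, onLine_mk_iff]; simpa using congrArg Prod.snd hv

lemma finrank_span_pair_of_ne {V : Type*} [AddCommGroup V] [Module K V]
    {x y : Projectivization K V} (h : x ≠ y) :
    finrank K (span K (Set.range (Projectivization.rep ∘ ![x, y]))) = 2 := by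
  rw [finrank_span_eq_card (independent_iff.1 ((independent_pair_iff_ne x y).2 h))]
  simp

lemma eq_of_onLine_of_onLine {L₁ L₂ : PLine K} (hL : L₁ ≠ L₂) {P Q : PPoint K}
    (hP₁ : OnLine P L₁) (hP₂ : OnLine P L₂) (hQ₁ : OnLine Q L₁) (hQ₂ : OnLine Q L₂) :
    P = Q := by
  by_contra hPQ
  set W := span K (Set.range (Projectivization.rep ∘ ![P, Q]))
  have hann : finrank K W.dualAnnihilator = 1 := by
    have := Subspace.finrank_add_finrank_dualAnnihilator_eq W
    rw [finrank_span_pair_of_ne hPQ, finrank_fin_fun] at this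
    omega
  have hle : span K (Set.range (Projectivization.rep ∘ ![L₁, L₂])) ≤ W.dualAnnihilator := by
    refine span_le.2 ?_
    rintro _ ⟨i, rfl⟩
    rw [SetLike.mem_coe, mem_dualAnnihilator]
    intro w hw
    refine (span_le (p := LinearMap.ker _)).2 ?_ hw
    rintro _ ⟨j, rfl⟩
    fin_cases i <;> fin_cases j <;> assumption
  have := finrank_mono hle
  rw [finrank_span_pair_of_ne hL, hann] at this
  omega

end Incidence

section Configuration

open scoped Classical

variable {K : Type*} [Field K] (𝓛 : Finset (PLine K))

/-- For equal lines, `meet` is an arbitrary point of the line. -/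
noncomputable def meet (L₁ L₂ : PLine K) : PPoint K := (exists_onLine_onLine L₁ L₂).choose

lemma onLine_meet_left (L₁ L₂ : PLine K) : OnLine (meet L₁ L₂) L₁ :=
  (exists_onLine_onLine L₁ L₂).choose_spec.1

lemma onLine_meet_right (L₁ L₂ : PLine K) : OnLine (meet L₁ L₂) L₂ :=
  (exists_onLine_onLine L₁ L₂).choose_spec.2

lemma meet_eq {L₁ L₂ : PLine K} (hL : L₁ ≠ L₂) {P : PPoint K} (h₁ : OnLine P L₁)
    (h₂ : OnLine P L₂) : meet L₁ L₂ = P :=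
  eq_of_onLine_of_onLine hL (onLine_meet_left L₁ L₂) (onLine_meet_right L₁ L₂) h₁ h₂

lemma mult_eq_card_filter (P : PPoint K) : mult 𝓛 P = #{L ∈ 𝓛 | OnLine P L} := by
  rw [mult, ← Set.ncard_coe_finset, coe_filter]

noncomputable def singFinset : Finset (PPoint K) := 𝓛.offDiag.image fun p ↦ meet p.1 p.2

lemma mem_singFinset {P : PPoint K} : P ∈ singFinset 𝓛 ↔ 2 ≤ mult 𝓛 P := by
  rw [mult_eq_card_filter, singFinset, mem_image]
  change _ ↔ 1 < _
  rw [one_lt_card_iff]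
  constructor
  · rintro ⟨⟨L₁, L₂⟩, hL, rfl⟩
    obtain ⟨h₁, h₂, hne⟩ := mem_offDiag.1 hL
    exact ⟨L₁, L₂, mem_filter.2 ⟨h₁, onLine_meet_left ..⟩,
      mem_filter.2 ⟨h₂, onLine_meet_right ..⟩, hne⟩
  · rintro ⟨L₁, L₂, h₁, h₂, hne⟩
    rw [mem_filter] at h₁ h₂
    exact ⟨(L₁, L₂), mem_offDiag.2 ⟨h₁.1, h₂.1, hne⟩, meet_eq hne h₁.2 h₂.2⟩

lemma coe_singFinset : (singFinset 𝓛 : Set (PPoint K)) = SingPts 𝓛 := by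
  ext P
  exact mem_singFinset 𝓛

lemma singFinset_nonempty (h : 2 ≤ #𝓛) : (singFinset 𝓛).Nonempty := by
  obtain ⟨L₁, h₁, L₂, h₂, hne⟩ := one_lt_card.1 h
  exact ⟨_, mem_image_of_mem (fun p ↦ meet p.1 p.2) (s := 𝓛.offDiag) (a := (L₁, L₂))
    (mem_offDiag.2 ⟨h₁, h₂, hne⟩)⟩

/-- Each ordered pair of distinct lines meets in exactly one singular point. -/
lemma sum_mult_mul_pred : ∑ P ∈ singFinset 𝓛, mult 𝓛 P * (mult 𝓛 P - 1) = #𝓛 * (#𝓛 - 1) := by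
  rw [Nat.mul_sub_one, ← offDiag_card, card_eq_sum_card_fiberwise (t := singFinset 𝓛)
    (f := fun p ↦ meet p.1 p.2) fun p hp ↦ mem_image_of_mem _ hp]
  refine sum_congr rfl fun P _ ↦ ?_
  have hfiber : {p ∈ 𝓛.offDiag | meet p.1 p.2 = P} = {L ∈ 𝓛 | OnLine P L}.offDiag := by
    ext ⟨L₁, L₂⟩
    simp only [mem_filter, mem_offDiag]
    constructor
    · rintro ⟨⟨h₁, h₂, hne⟩, rfl⟩
      exact ⟨⟨h₁, onLine_meet_left ..⟩, ⟨h₂, onLine_meet_right ..⟩, hne⟩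
    · rintro ⟨⟨h₁, o₁⟩, ⟨h₂, o₂⟩, hne⟩
      exact ⟨⟨h₁, h₂, hne⟩, meet_eq hne o₁ o₂⟩
  rw [hfiber, offDiag_card, mult_eq_card_filter, Nat.mul_sub_one]

lemma sum_mult_pred_of_mem {L : PLine K} (hL : L ∈ 𝓛) :
    ∑ P ∈ singFinset 𝓛 with OnLine P L, (mult 𝓛 P - 1) = #𝓛 - 1 := by
  have hmaps : ∀ L' ∈ 𝓛.erase L, meet L L' ∈ {P ∈ singFinset 𝓛 | OnLine P L} := by
    intro L' hL'
    obtain ⟨hne, hL'⟩ := mem_erase.1 hL'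
    exact mem_filter.2 ⟨mem_image_of_mem (fun p ↦ meet p.1 p.2) (s := 𝓛.offDiag) (a := (L, L'))
      (mem_offDiag.2 ⟨hL, hL', Ne.symm hne⟩),
      onLine_meet_left ..⟩
  rw [← card_erase_of_mem hL, card_eq_sum_card_fiberwise hmaps]
  refine sum_congr rfl fun P hP ↦ ?_
  have hPL := (mem_filter.1 hP).2
  have hfiber : {L' ∈ 𝓛.erase L | meet L L' = P} = {L' ∈ 𝓛 | OnLine P L'}.erase L := by
    ext L'
    simp only [mem_filter, mem_erase]
    constructor
    · rintro ⟨⟨hne, h⟩, rfl⟩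
      exact ⟨hne, h, onLine_meet_right ..⟩
    · rintro ⟨hne, h, o⟩
      exact ⟨⟨hne, h⟩, meet_eq (Ne.symm hne) hPL o⟩
  rw [hfiber, card_erase_of_mem (mem_filter.2 ⟨hL, hPL⟩), mult_eq_card_filter]

lemma exists_even_mult_onLine (hd : Even #𝓛) {L : PLine K} (hL : L ∈ 𝓛) :
    ∃ P ∈ singFinset 𝓛, OnLine P L ∧ Even (mult 𝓛 P) := by
  by_contra! hodd
  have heven : Even (#𝓛 - 1) := by
    rw [← sum_mult_pred_of_mem 𝓛 hL]
    refine even_sum _ fun P hP ↦ ?_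
    obtain ⟨hPS, hPL⟩ := mem_filter.1 hP
    obtain ⟨k, hk⟩ := Nat.not_even_iff_odd.1 (hodd P hPS hPL)
    exact ⟨k, by omega⟩
  obtain ⟨a, ha⟩ := hd
  obtain ⟨b, hb⟩ := heven
  have := card_pos.2 ⟨L, hL⟩
  omega

lemma card_le_sum_even_mult (hd : Even #𝓛) :
    #𝓛 ≤ ∑ P ∈ singFinset 𝓛 with Even (mult 𝓛 P), mult 𝓛 P := by
  calc #𝓛 = ∑ _L ∈ 𝓛, 1 := card_eq_sum_ones 𝓛
    _ ≤ ∑ L ∈ 𝓛, #{P ∈ {P ∈ singFinset 𝓛 | Even (mult 𝓛 P)} | OnLine P L} := by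
      refine sum_le_sum fun L hL ↦ one_le_card.2 ?_
      obtain ⟨P, hPS, hPL, hP⟩ := exists_even_mult_onLine 𝓛 hd hL
      exact ⟨P, mem_filter.2 ⟨mem_filter.2 ⟨hPS, hP⟩, hPL⟩⟩
    _ = ∑ P ∈ singFinset 𝓛 with Even (mult 𝓛 P), mult 𝓛 P := by
      simp_rw [mult_eq_card_filter]
      exact (sum_card_bipartiteAbove_eq_sum_card_bipartiteBelow (fun P L ↦ OnLine P L) ..).symm

lemma singFinset_subset_of_le_sum {T : Finset (PPoint K)}
    (hT : #𝓛 * (#𝓛 - 1) ≤ ∑ P ∈ T, mult 𝓛 P * (mult 𝓛 P - 1)) : singFinset 𝓛 ⊆ T := by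
  intro P hPS
  by_contra hPT
  have hle : ∑ Q ∈ T, mult 𝓛 Q * (mult 𝓛 Q - 1) ≤
      ∑ Q ∈ (singFinset 𝓛).erase P, mult 𝓛 Q * (mult 𝓛 Q - 1) := by
    refine sum_le_sum_of_ne_zero fun Q hQT hQ ↦ mem_erase.2 ⟨fun h ↦ hPT (h ▸ hQT), ?_⟩
    rw [mem_singFinset]
    by_contra! h
    exact hQ (by interval_cases mult 𝓛 Q <;> rfl)
  have hP : 2 ≤ mult 𝓛 P * (mult 𝓛 P - 1) := by
    have := (mem_singFinset 𝓛).1 hPS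
    nlinarith [Nat.sub_add_cancel (by omega : 1 ≤ mult 𝓛 P)]
  have := sum_erase_add _ (fun Q ↦ mult 𝓛 Q * (mult 𝓛 Q - 1)) hPS
  rw [sum_mult_mul_pred] at this
  omega

lemma tk_eq_card_filter {k : ℕ} (hk : 2 ≤ k) : tk 𝓛 k = #{P ∈ singFinset 𝓛 | mult 𝓛 P = k} := by
  rw [tk, ← Set.ncard_coe_finset, coe_filter]
  congr 1
  ext P
  exact ⟨fun h ↦ ⟨(mem_singFinset 𝓛).2 (h ▸ hk), h⟩, And.right⟩

lemma HL_eq : HL 𝓛 = (#𝓛 - ∑ P ∈ singFinset 𝓛, (mult 𝓛 P : ℚ)) / #(singFinset 𝓛) := by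
  rw [HL, ← coe_singFinset, Set.ncard_coe_finset, finsum_mem_coe_finset]
  have cast_mul_pred (n : ℕ) : ((n * (n - 1) : ℕ) : ℚ) = (n : ℚ) ^ 2 - n := by
    rcases n with _ | n <;> push_cast [Nat.add_sub_cancel] <;> ring
  have hpairs := congrArg (Nat.cast (R := ℚ)) (sum_mult_mul_pred 𝓛)
  simp only [Nat.cast_sum, cast_mul_pred, sum_sub_distrib] at hpairs
  congr 1
  linarith

end Configuration

section SixLines

variable {K : Type*} [Field K]

theorem neg_twelve_div_seven_le_HL {𝓛 : Finset (PLine K)} (h𝓛 : #𝓛 = 6) : -12 / 7 ≤ HL 𝓛 := by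
  set S := singFinset 𝓛
  have hS : (0 : ℚ) < #S := by exact_mod_cast card_pos.2 (singFinset_nonempty 𝓛 (by omega))
  have hpointwise : ∀ P ∈ S,
      14 * mult 𝓛 P + (if Even (mult 𝓛 P) then mult 𝓛 P else 0) ≤
        3 * (mult 𝓛 P * (mult 𝓛 P - 1)) + 24 := by
    intro P hP
    have h2 := (mem_singFinset 𝓛).1 hP
    generalize mult 𝓛 P = m at h2 ⊢
    obtain ⟨k, rfl⟩ := Nat.exists_eq_add_of_le h2
    rcases k with _ | _ | _ | k
    all_goals norm_num [Nat.even_add_one]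
    split_ifs <;> nlinarith
  have hsum := sum_le_sum hpointwise
  rw [sum_add_distrib, ← sum_filter, ← mul_sum, sum_add_distrib, ← mul_sum, sum_mult_mul_pred,
    h𝓛, sum_const, smul_eq_mul] at hsum
  have heven : 6 ≤ ∑ P ∈ S with Even (mult 𝓛 P), mult 𝓛 P :=
    h𝓛 ▸ card_le_sum_even_mult 𝓛 (by rw [h𝓛]; decide)
  have key : 7 * ∑ P ∈ S, (mult 𝓛 P : ℚ) ≤ 42 + 12 * #S := by
    rw [← Nat.cast_sum]
    exact_mod_cast (by omega : 7 * ∑ P ∈ S, mult 𝓛 P ≤ 42 + 12 * #S)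
  rw [HL_eq, h𝓛, le_div_iff₀ hS]
  push_cast
  linarith

end SixLines

section IntegerCoordinates

open Matrix Function

variable {K : Type*} [Field K] [CharZero K]

lemma intCast_comp_ne_zero {v : Fin 3 → ℤ} (hv : v ≠ 0) : (Int.cast ∘ v : Fin 3 → K) ≠ 0 := by
  simpa using (Int.cast_injective (α := K)).comp_left.ne hv

noncomputable def intPoint (v : Fin 3 → ℤ) (hv : v ≠ 0) : PPoint K :=
  mk K (Int.cast ∘ v) (intCast_comp_ne_zero hv)

/-- The line `c₀ x₀ + c₁ x₁ + c₂ x₂ = 0`. -/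
noncomputable def intLine (c : Fin 3 → ℤ) (hc : c ≠ 0) : PLine K :=
  (intPoint c hc).map (dotProductEquiv K (Fin 3)).toLinearMap (dotProductEquiv K (Fin 3)).injective

lemma intPoint_onLine_intLine_iff {v c : Fin 3 → ℤ} (hv : v ≠ 0) (hc : c ≠ 0) :
    OnLine (intPoint v hv : PPoint K) (intLine c hc) ↔ c ⬝ᵥ v = 0 := by
  rw [intLine, intPoint, intPoint, map_mk, onLine_mk_iff]
  change (Int.castRingHom K ∘ c) ⬝ᵥ (Int.castRingHom K ∘ v) = 0 ↔ _
  rw [← RingHom.map_dotProduct, eq_intCast, Int.cast_eq_zero]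

lemma intPoint_ne_intPoint {v w : Fin 3 → ℤ} (hv : v ≠ 0) (hw : w ≠ 0) (h : v ⨯₃ w ≠ 0) :
    (intPoint v hv : PPoint K) ≠ intPoint w hw := by
  rw [intPoint, intPoint, ← independent_pair_iff_ne, independent_mk_iff_LinearIndependent,
    ← crossProduct_ne_zero_iff_linearIndependent]
  have hcast : (Int.cast ∘ v : Fin 3 → K) ⨯₃ (Int.cast ∘ w) = Int.cast ∘ (v ⨯₃ w) := by
    ext i; fin_cases i <;> simp [cross_apply]
  rw [hcast]
  exact intCast_comp_ne_zero h

lemma intLine_ne_intLine {c d : Fin 3 → ℤ} (hc : c ≠ 0) (hd : d ≠ 0) (h : c ⨯₃ d ≠ 0) :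
    (intLine c hc : PLine K) ≠ intLine d hd :=
  (Projectivization.map_injective _ _).ne (intPoint_ne_intPoint hc hd h)

end IntegerCoordinates

section Quadrangle

open Matrix Function
open scoped Classical

variable {K : Type*} [Field K] [CharZero K]

/-- The sides of the complete quadrangle with vertices `(1:0:0), (0:1:0), (0:0:1), (1:1:1)`. -/
def quadrangleSides : Fin 6 → Fin 3 → ℤ :=
  ![![0, 0, 1], ![0, 1, 0], ![0, 1, -1], ![1, 0, 0], ![1, 0, -1], ![1, -1, 0]]

/-- The four vertices and the three diagonal points of the quadrangle. -/
def quadranglePoints : Fin 7 → Fin 3 → ℤ :=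
  ![![1, 0, 0], ![0, 1, 0], ![0, 0, 1], ![1, 1, 1], ![1, 1, 0], ![1, 0, 1], ![0, 1, 1]]

def quadrangleMult (j : Fin 7) : ℕ := #{i | quadrangleSides i ⬝ᵥ quadranglePoints j = 0}

lemma quadrangleSides_ne_zero : ∀ i, quadrangleSides i ≠ 0 := by decide

lemma quadranglePoints_ne_zero : ∀ j, quadranglePoints j ≠ 0 := by decide

noncomputable def quadrangleLine (i : Fin 6) : PLine K := intLine _ (quadrangleSides_ne_zero i)

noncomputable def quadranglePoint (j : Fin 7) : PPoint K := intPoint _ (quadranglePoints_ne_zero j)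

noncomputable def quadrangle : Finset (PLine K) := univ.image quadrangleLine

lemma quadrangleLine_injective : Injective (quadrangleLine (K := K)) := by
  intro i i' h
  by_contra hne
  have hcross : Pairwise fun i j ↦ quadrangleSides i ⨯₃ quadrangleSides j ≠ 0 := by
    unfold Pairwise; decide
  exact intLine_ne_intLine _ _ (hcross hne) h

lemma quadranglePoint_injective : Injective (quadranglePoint (K := K)) := by
  intro j j' h
  by_contra hne
  have hcross : Pairwise fun i j ↦ quadranglePoints i ⨯₃ quadranglePoints j ≠ 0 := by
    unfold Pairwise; decide
  exact intPoint_ne_intPoint _ _ (hcross hne) h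

lemma card_quadrangle : #(quadrangle : Finset (PLine K)) = 6 := by
  rw [quadrangle, card_image_of_injective _ quadrangleLine_injective, card_univ, Fintype.card_fin]

lemma mult_quadrangle (j : Fin 7) :
    mult (quadrangle : Finset (PLine K)) (quadranglePoint j) = quadrangleMult j := by
  rw [mult_eq_card_filter, quadrangle, filter_image,
    card_image_of_injective _ quadrangleLine_injective, quadrangleMult]
  congr 1
  ext i
  simp [quadranglePoint, quadrangleLine, intPoint_onLine_intLine_iff]

lemma singFinset_quadrangle :
    singFinset (quadrangle : Finset (PLine K)) = univ.image quadranglePoint := by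
  refine subset_antisymm (singFinset_subset_of_le_sum _ ?_) ?_
  · rw [sum_image quadranglePoint_injective.injOn, card_quadrangle]
    simp only [mult_quadrangle]
    decide
  · intro P hP
    obtain ⟨j, -, rfl⟩ := mem_image.1 hP
    rw [mem_singFinset, mult_quadrangle]
    exact (by decide : ∀ j, 2 ≤ quadrangleMult j) j

lemma tk_quadrangle {k : ℕ} (hk : 2 ≤ k) :
    tk (quadrangle : Finset (PLine K)) k = #{j | quadrangleMult j = k} := by
  rw [tk_eq_card_filter _ hk, singFinset_quadrangle, filter_image,
    card_image_of_injective _ quadranglePoint_injective]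
  simp only [mult_quadrangle]

lemma HL_quadrangle : HL (quadrangle : Finset (PLine K)) = -12 / 7 := by
  rw [HL_eq, singFinset_quadrangle, sum_image quadranglePoint_injective.injOn,
    card_image_of_injective _ quadranglePoint_injective, card_quadrangle]
  simp only [mult_quadrangle]
  rw [← Nat.cast_sum, (by decide : ∑ j, quadrangleMult j = 18)]
  norm_num

end Quadrangle

/-- The absolute linear Harbourne constant for `6` lines equals `−12/7`, attained over `ℂ`
by a configuration with `t₂ = 3`, `t₃ = 4`. -/
theorem HL_six_lines :
    (∀ (K : Type*) [Field K] (𝓛 : Finset (PLine K)), 𝓛.card = 6 → -12/7 ≤ HL 𝓛) ∧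
    (∃ 𝓛 : Finset (PLine ℂ), 𝓛.card = 6 ∧ tk 𝓛 2 = 3 ∧ tk 𝓛 3 = 4 ∧ HL 𝓛 = -12/7) :=
  ⟨fun _ _ _ ↦ neg_twelve_div_seven_le_HL,
    ⟨quadrangle, card_quadrangle, by rw [tk_quadrangle le_rfl]; decide,
      by rw [tk_quadrangle (by norm_num)]; decide, HL_quadrangle⟩⟩
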